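/- arXiv:1403.5440 — 7 statements merged into one kernel-verified Lean document; each statement's English description precedes it below -/
import Mathlib

section
/- Every connected Cayley graph over a finite Abelian group with n generators is isomorphic to the graph G(M) = Cay(Z^n / M Z^n ; ±B_n) for some non-singular integer matrix M of size n×n, where B_n = {e_1,...,e_n} is the standard basis. -/
open Matrix Polynomial

abbrev Zq {n : ℕ} (M : Matrix (Fin n) (Fin n) ℤ) : Type :=
  (Fin n → ℤ) ⧸ LinearMap.range M.mulVecLin

def qk {n : ℕ} (M : Matrix (Fin n) (Fin n) ℤ) (v : Fin n → ℤ) : Zq M :=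
  Submodule.Quotient.mk v

/-- The Cayley graph `G(M)` on `ℤⁿ/Mℤⁿ` with connection set `±B_n`. -/
def GM {n : ℕ} (M : Matrix (Fin n) (Fin n) ℤ) : SimpleGraph (Zq M) :=
  SimpleGraph.fromRel fun v w => ∃ i : Fin n, w - v = qk M (Pi.single i 1)

/-- The connection set `±B_n` inside the quotient group. -/
def genSet {n : ℕ} (M : Matrix (Fin n) (Fin n) ℤ) : Set (Zq M) :=
  {x | ∃ i : Fin n, x = qk M (Pi.single i 1) ∨ x = -qk M (Pi.single i 1)}

def NoNontrivial4Cycles {n : ℕ} (M : Matrix (Fin n) (Fin n) ℤ) : Prop :=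
  ∀ a b c d : Zq M, a ∈ genSet M → b ∈ genSet M → c ∈ genSet M → d ∈ genSet M →
    a + b + c + d = 0 → a = -b ∨ a = -c ∨ a = -d

def IsSignedPerm {n : ℕ} (P : Matrix (Fin n) (Fin n) ℤ) : Prop :=
  ∃ (σ : Equiv.Perm (Fin n)) (ε : Fin n → ℤ), (∀ i, ε i = 1 ∨ ε i = -1) ∧
    ∀ i j, P i j = if i = σ j then ε j else 0

def SimilarInt {n : ℕ} (A B : Matrix (Fin n) (Fin n) ℤ) : Prop :=
  ∃ U : Matrix (Fin n) (Fin n) ℤ, IsUnit U.det ∧ A * U = U * B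

/-- An undirected Cayley graph over an abelian group with generators `g 0, …, g (n-1)`. -/
def cayley {n : ℕ} (Γ : Type) [AddCommGroup Γ] (g : Fin n → Γ) : SimpleGraph Γ :=
  SimpleGraph.fromRel fun x y => ∃ i : Fin n, y - x = g i

/-!
Since the Cayley graph is connected, the generators span `Γ`, so `φ : ℤⁿ → Γ`, `e_i ↦ g i`, is onto.
Its kernel has finite index, hence rank `n`, and is therefore the column lattice `Mℤⁿ` of a
nonsingular integer matrix `M` (columns: a `ℤ`-basis of the kernel). The induced group isomorphism
`ℤⁿ/Mℤⁿ ≃ Γ` sends `e_i` to `g i`, so it is an isomorphism of Cayley graphs.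
-/

section Cayley

variable {n : ℕ} {Γ Γ' : Type} [AddCommGroup Γ] [AddCommGroup Γ']

theorem sub_mem_span_of_cayley_reachable {g : Fin n → Γ} {x y : Γ}
    (h : (cayley Γ g).Reachable x y) : y - x ∈ Submodule.span ℤ (Set.range g) := by
  rw [SimpleGraph.reachable_iff_reflTransGen] at h
  induction h with
  | refl => simp
  | @tail y z _ hyz ih =>
    obtain ⟨-, ⟨i, hi⟩ | ⟨i, hi⟩⟩ := (SimpleGraph.fromRel_adj _ _ _).mp hyz
    · rw [← sub_add_sub_cancel' y, hi]
      exact add_mem ih (Submodule.subset_span ⟨i, rfl⟩)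
    · rw [← sub_sub_sub_cancel_left x z y, hi]
      exact sub_mem ih (Submodule.subset_span ⟨i, rfl⟩)

theorem span_range_eq_top_of_cayley_connected {g : Fin n → Γ} (h : (cayley Γ g).Connected) :
    Submodule.span ℤ (Set.range g) = ⊤ :=
  Submodule.eq_top_iff'.mpr fun x => by simpa using sub_mem_span_of_cayley_reachable (h 0 x)

def cayleyIsoOfAddEquiv (e : Γ ≃+ Γ') {g : Fin n → Γ} {g' : Fin n → Γ'}
    (h : ∀ i, e (g i) = g' i) : cayley Γ g ≃g cayley Γ' g' where
  toEquiv := e.toEquiv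
  map_rel_iff' := by simp [cayley, ← map_sub, ← h]

end Cayley

section Lattice

variable {ι : Type} [Fintype ι]

theorem finrank_eq_of_finite_quotient (K : Submodule ℤ (ι → ℤ)) [Finite ((ι → ℤ) ⧸ K)] :
    Module.finrank ℤ K = Fintype.card ι := by
  set N : ℤ := (Nat.card ((ι → ℤ) ⧸ K) : ℤ)
  have hN : N ≠ 0 := by simpa [N] using Nat.card_pos.ne'
  have hmem (v : ι → ℤ) : N • v ∈ K := by
    rw [← Submodule.Quotient.mk_eq_zero, Submodule.Quotient.mk_smul, natCast_zsmul,
      card_nsmul_eq_zero']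
  let scale : (ι → ℤ) →ₗ[ℤ] K := LinearMap.codRestrict K (N • LinearMap.id) hmem
  have hscale : Function.Injective scale := fun v w hvw =>
    smul_right_injective _ hN (congrArg Subtype.val hvw)
  refine le_antisymm ?_ ?_
  · simpa using Submodule.finrank_le K
  · simpa using LinearMap.finrank_le_finrank_of_injective hscale

theorem mulVecLin_of_basis_coe (K : Submodule ℤ (ι → ℤ)) (b : Module.Basis ι ℤ K) :
    (Matrix.of fun i j => (b j : ι → ℤ) i).mulVecLin =
      K.subtype ∘ₗ b.equivFun.symm.toLinearMap := by
  refine LinearMap.ext fun v => funext fun i => ?_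
  simp [Matrix.mulVec, dotProduct, Module.Basis.equivFun_symm_apply, mul_comm]

theorem exists_matrix_range_eq_of_finite_quotient [DecidableEq ι] (K : Submodule ℤ (ι → ℤ))
    [Finite ((ι → ℤ) ⧸ K)] :
    ∃ M : Matrix ι ι ℤ, M.det ≠ 0 ∧ LinearMap.range M.mulVecLin = K := by
  have hcard : Fintype.card (Module.Free.ChooseBasisIndex ℤ K) = Fintype.card ι := by
    rw [← Module.finrank_eq_card_chooseBasisIndex, finrank_eq_of_finite_quotient]
  let b := (Module.Free.chooseBasis ℤ K).reindex (Fintype.equivOfCardEq hcard)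
  have hM := mulVecLin_of_basis_coe K b
  set M := Matrix.of fun i j => (b j : ι → ℤ) i
  refine ⟨M, ?_, ?_⟩
  · have hinj : Function.Injective M.mulVecLin := by
      rw [hM, LinearMap.coe_comp]
      exact K.injective_subtype.comp b.equivFun.symm.injective
    rw [Ne, ← Matrix.exists_mulVec_eq_zero_iff]
    rintro ⟨v, hv, hMv⟩
    exact hv (hinj (by simpa using hMv))
  · rw [hM, LinearMap.range_comp_of_range_eq_top _ (LinearEquiv.range _), Submodule.range_subtype]

end Lattice

theorem stmt_0 {n : ℕ} (Γ : Type) [AddCommGroup Γ] [Fintype Γ] (g : Fin n → Γ)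
    (hconn : (cayley Γ g).Connected) :
    ∃ M : Matrix (Fin n) (Fin n) ℤ, M.det ≠ 0 ∧ Nonempty (cayley Γ g ≃g GM M) := by
  let φ := Fintype.linearCombination ℤ g
  have hφ : Function.Surjective φ := by
    rw [← LinearMap.range_eq_top, Fintype.range_linearCombination]
    exact span_range_eq_top_of_cayley_connected hconn
  have : Finite ((Fin n → ℤ) ⧸ LinearMap.ker φ) :=
    Finite.of_equiv _ (φ.quotKerEquivOfSurjective hφ).symm.toEquiv
  obtain ⟨M, hdet, hM⟩ := exists_matrix_range_eq_of_finite_quotient (LinearMap.ker φ)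
  let e : Zq M ≃ₗ[ℤ] Γ := (Submodule.quotEquivOfEq _ _ hM).trans (φ.quotKerEquivOfSurjective hφ)
  have he (i : Fin n) : e (qk M (Pi.single i 1)) = g i := by simp [e, qk, φ]
  -- `GM M` is definitionally `cayley (Zq M) fun i => qk M (Pi.single i 1)`.
  exact ⟨M, hdet, ⟨(cayleyIsoOfAddEquiv e.toAddEquiv he).symm⟩⟩
end

section
/- Let G(M) have no nontrivial 4-cycles. Then every graph automorphism f of G(M) with f(0) = 0 satisfies f(a+b) = f(a) + f(b) for all a, b in ±B_n. -/
open Matrix Polynomial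

lemma neg_mem_genSet {n : ℕ} {M : Matrix (Fin n) (Fin n) ℤ} {x : Zq M}
    (hx : x ∈ genSet M) : -x ∈ genSet M := by
  obtain ⟨i, hx | hx⟩ := hx
  · exact ⟨i, Or.inr (by rw [hx])⟩
  · exact ⟨i, Or.inl (by rw [hx, neg_neg])⟩

lemma adj_iff' {n : ℕ} {M : Matrix (Fin n) (Fin n) ℤ} {v w : Zq M} :
    (GM M).Adj v w ↔ v ≠ w ∧ (w - v) ∈ genSet M := by
  rw [GM, SimpleGraph.fromRel_adj]
  constructor
  · rintro ⟨hne, ⟨i, hi⟩ | ⟨i, hi⟩⟩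
    · exact ⟨hne, i, Or.inl hi⟩
    · exact ⟨hne, i, Or.inr (by rw [← neg_sub v w, hi])⟩
  · rintro ⟨hne, i, hi | hi⟩
    · exact ⟨hne, Or.inl ⟨i, hi⟩⟩
    · exact ⟨hne, Or.inr ⟨i, by rw [← neg_sub w v, hi, neg_neg]⟩⟩

lemma gen_map {n : ℕ} {M : Matrix (Fin n) (Fin n) ℤ}
    (g : GM M ≃g GM M) (hg : g 0 = 0) {x : Zq M}
    (hx : x ∈ genSet M) (hx0 : x ≠ 0) : g x ∈ genSet M ∧ g x ≠ 0 := by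
  have hadj : (GM M).Adj 0 x := adj_iff'.mpr ⟨fun hh => hx0 hh.symm, by simpa using hx⟩
  have h2 := g.map_adj_iff.mpr hadj
  rw [hg, adj_iff'] at h2
  exact ⟨by simpa using h2.2, fun hh => h2.1 hh.symm⟩

lemma only_common {n : ℕ} {M : Matrix (Fin n) (Fin n) ℤ}
    (h : NoNontrivial4Cycles M) {a : Zq M} (ha : a ∈ genSet M) (h2 : a + a ≠ 0)
    {z : Zq M} (hz1 : (GM M).Adj a z) (hz2 : (GM M).Adj (-a) z) : z = 0 := by
  rw [adj_iff'] at hz1 hz2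
  have hs : z - a ∈ genSet M := hz1.2
  have ht : z - -a ∈ genSet M := hz2.2
  have ht' : -(z + a) ∈ genSet M := by
    have := neg_mem_genSet ht
    simpa [sub_neg_eq_add] using this
  have := h a a (z - a) (-(z + a)) ha ha hs ht' (by abel)
  rcases this with h1 | h1 | h1
  · exact absurd (add_eq_zero_iff_eq_neg.mpr h1) h2
  · rw [neg_sub] at h1
    exact sub_eq_self.mp h1.symm
  · rw [neg_neg] at h1
    exact add_eq_right.mp h1.symm

section main
variable {n : ℕ} {M : Matrix (Fin n) (Fin n) ℤ}

lemma map_neg_gen (h : NoNontrivial4Cycles M) (f : GM M ≃g GM M) (hf : f 0 = 0)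
    {a : Zq M} (ha : a ∈ genSet M) : f (-a) = -(f a) := by
  have hf' : f.symm 0 = 0 := by
    have := congrArg f.symm hf
    rw [f.symm_apply_apply] at this
    exact this.symm
  by_cases ha0 : a = 0
  · simp [ha0, hf]
  obtain ⟨hc, hc0⟩ := gen_map f hf ha ha0
  set c := f a with hcdef
  by_cases h2 : a + a = 0
  · -- a = -a, need c + c = 0
    have haa : -a = a := neg_eq_of_add_eq_zero_left h2
    have hcc : c + c = 0 := by
      by_contra hcc
      have hnc : -c ∈ genSet M := neg_mem_genSet hc
      have hnc0 : -c ≠ 0 := by simpa using hc0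
      obtain ⟨ha'', ha''0⟩ := gen_map f.symm hf' hnc hnc0
      set a'' := f.symm (-c) with ha''def
      have hne : a'' ≠ a := by
        intro hh
        apply hcc
        have hfa : f a'' = -c := f.apply_symm_apply _
        rw [hh, ← hcdef] at hfa
        exact add_eq_zero_iff_eq_neg.mpr hfa
      have hx1 : (GM M).Adj a (a + a'') := adj_iff'.mpr
        ⟨fun hh => ha''0 (add_eq_left.mp hh.symm), by simpa using ha''⟩
      have hx2 : (GM M).Adj a'' (a + a'') := adj_iff'.mpr
        ⟨fun hh => ha0 (add_eq_right.mp hh.symm), by simpa using ha⟩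
      have hfx1 : (GM M).Adj c (f (a + a'')) := by
        rw [hcdef]; exact f.map_adj_iff.mpr hx1
      have hfx2 : (GM M).Adj (-c) (f (a + a'')) := by
        have hfa : f a'' = -c := f.apply_symm_apply _
        rw [← hfa]; exact f.map_adj_iff.mpr hx2
      have hz := only_common h hc hcc hfx1 hfx2
      have hz0 : a + a'' = 0 := by
        have := congrArg f.symm hz
        rwa [f.symm_apply_apply, hf'] at this
      apply hne
      have : a'' = -a := eq_neg_of_add_eq_zero_right hz0
      rw [this, haa]
    rw [haa, ← hcdef]
    exact eq_neg_of_add_eq_zero_left hcc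
  · -- a + a ≠ 0
    have hna : -a ∈ genSet M := neg_mem_genSet ha
    have hna0 : -a ≠ 0 := by simpa using ha0
    obtain ⟨hd, hd0⟩ := gen_map f hf hna hna0
    set d := f (-a) with hddef
    by_contra hne
    have hcd0 : c + d ≠ 0 := fun hh => hne (eq_neg_of_add_eq_zero_right hh)
    have hy1 : (GM M).Adj c (c + d) := adj_iff'.mpr
      ⟨fun hh => hd0 (add_eq_left.mp hh.symm), by simpa using hd⟩
    have hy2 : (GM M).Adj d (c + d) := adj_iff'.mpr
      ⟨fun hh => hc0 (add_eq_right.mp hh.symm), by simpa using hc⟩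
    have hp1 : (GM M).Adj a (f.symm (c + d)) := by
      have := f.symm.map_adj_iff.mpr hy1
      rwa [hcdef, f.symm_apply_apply] at this
    have hp2 : (GM M).Adj (-a) (f.symm (c + d)) := by
      have := f.symm.map_adj_iff.mpr hy2
      rwa [hddef, f.symm_apply_apply] at this
    have hz := only_common h ha h2 hp1 hp2
    apply hcd0
    have := congrArg f hz
    rwa [f.apply_symm_apply, hf] at this

lemma map_double (h : NoNontrivial4Cycles M) (f : GM M ≃g GM M) (hf : f 0 = 0)
    {a : Zq M} (ha : a ∈ genSet M) (ha0 : a ≠ 0) (h2 : a + a ≠ 0) :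
    f (a + a) = f a + f a := by
  have hf' : f.symm 0 = 0 := by
    have := congrArg f.symm hf
    rw [f.symm_apply_apply] at this
    exact this.symm
  obtain ⟨hc, hc0⟩ := gen_map f hf ha ha0
  set c := f a with hcdef
  set w := f (a + a) with hwdef
  have hw0 : w ≠ 0 := by
    rw [hwdef, ← hf]
    exact fun hh => h2 (f.injective hh)
  have haa : (GM M).Adj a (a + a) := adj_iff'.mpr
    ⟨fun hh => ha0 (add_eq_left.mp hh.symm), by simpa using ha⟩
  have hcw : (GM M).Adj c w := by
    rw [hcdef, hwdef]; exact f.map_adj_iff.mpr haa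
  rw [adj_iff'] at hcw
  set t := w - c with htdef
  have ht : t ∈ genSet M := hcw.2
  have ht0 : t ≠ 0 := by
    intro hh
    have hwc : w - c = 0 := by rw [← htdef]; exact hh
    exact hcw.1 (sub_eq_zero.mp hwc).symm
  have htc : t = c := by
    by_contra htc
    have htw : (GM M).Adj t w := adj_iff'.mpr
      ⟨by
        intro hh
        apply hc0
        have : w - c = w := by rw [← htdef, hh]
        exact sub_eq_self.mp this,
       by rw [htdef, sub_sub_cancel]; exact hc⟩
    obtain ⟨hzS, hz0⟩ := gen_map f.symm hf' ht ht0
    set z := f.symm t with hzdef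
    have hza : z ≠ a := by
      intro hh
      apply htc
      have := congrArg f hh
      rw [f.apply_symm_apply] at this
      exact this.trans hcdef.symm
    have hz2 : (GM M).Adj z (a + a) := by
      have := f.symm.map_adj_iff.mpr htw
      rwa [hwdef, f.symm_apply_apply] at this
    rw [adj_iff'] at hz2
    have hu : a + a - z ∈ genSet M := hz2.2
    have := h a a (-z) (-(a + a - z)) ha ha (neg_mem_genSet hzS) (neg_mem_genSet hu) (by abel)
    rcases this with h1 | h1 | h1
    · exact h2 (add_eq_zero_iff_eq_neg.mpr h1)
    · rw [neg_neg] at h1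
      exact hza h1.symm
    · rw [neg_neg] at h1
      have h1' := eq_sub_iff_add_eq.mp h1
      exact hza (add_left_cancel h1')
  rw [htdef, sub_eq_iff_eq_add] at htc
  rw [htc, add_comm]

theorem stmt_6 {n : ℕ} (M : Matrix (Fin n) (Fin n) ℤ)
    (h : NoNontrivial4Cycles M) (f : GM M ≃g GM M) (hf : f 0 = 0)
    (a b : Zq M) (ha : a ∈ genSet M) (hb : b ∈ genSet M) :
    f (a + b) = f a + f b := by
  by_cases ha0 : a = 0
  · simp [ha0, hf]
  by_cases hb0 : b = 0
  · simp [hb0, hf]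
  by_cases hab0 : a + b = 0
  · have hba : b = -a := eq_neg_of_add_eq_zero_right hab0
    rw [hab0, hf, hba, map_neg_gen h f hf ha]
    abel
  by_cases hab : a = b
  · rw [← hab] at hb0 hab0 ⊢
    exact map_double h f hf ha ha0 hab0
  -- general case
  obtain ⟨hc, hc0⟩ := gen_map f hf ha ha0
  obtain ⟨hd, hd0⟩ := gen_map f hf hb hb0
  set c := f a with hcdef
  set d := f b with hddef
  set w := f (a + b) with hwdef
  have hw0 : w ≠ 0 := by
    rw [hwdef, ← hf]
    exact fun hh => hab0 (f.injective hh)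
  have hadj1 : (GM M).Adj a (a + b) := adj_iff'.mpr
    ⟨fun hh => hb0 (add_eq_left.mp hh.symm), by simpa using hb⟩
  have hadj2 : (GM M).Adj b (a + b) := adj_iff'.mpr
    ⟨fun hh => ha0 (add_eq_right.mp hh.symm), by simpa using ha⟩
  have hcw : (GM M).Adj c w := by rw [hcdef, hwdef]; exact f.map_adj_iff.mpr hadj1
  have hdw : (GM M).Adj d w := by rw [hddef, hwdef]; exact f.map_adj_iff.mpr hadj2
  rw [adj_iff'] at hcw hdw
  have ht1 : w - c ∈ genSet M := hcw.2
  have ht2 : w - d ∈ genSet M := hdw.2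
  have := h c (w - c) (-(w - d)) (-d) hc ht1 (neg_mem_genSet ht2) (neg_mem_genSet hd) (by abel)
  rcases this with h1 | h1 | h1
  · exfalso
    apply hw0
    have : c + (w - c) = 0 := add_eq_zero_iff_eq_neg.mpr h1
    rw [add_sub_cancel] at this
    exact this
  · rw [neg_neg] at h1
    rw [eq_sub_iff_add_eq] at h1
    rw [← h1, add_comm]
  · exfalso
    rw [neg_neg] at h1
    exact hab (f.injective (by rw [← hcdef, ← hddef]; exact h1))
end main
end

section
/- If the graph G(M) has no nontrivial 4-cycles, then every graph automorphism of G(M) fixing the vertex 0 is a group automorphism of Z^n/M Z^n. -/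
/-!
A graph automorphism `f` of a Cayley graph of an abelian group sends each edge `x — x + s` to an
edge `f x — f x + a` with `a` in the connection set. Without nontrivial 4-cycles the common
neighbours of `x` and `x + s + t` (for `s + t ≠ 0`) are exactly `x + s` and `x + t`; as `f` maps
them onto the common neighbours `f x + a`, `f x + b` of the image endpoints, `f (x + t) = f x + b`,
i.e. `Δ_[s] f` is `t`-periodic. The case `s + s = 0` reduces to this one applied to `f⁻¹`. Since
the connection set generates the group, all second differences of `f` vanish, and therefore
`f (x + y) - f x = f y - f 0 = f y`.
-/

open Matrix Polynomial

open SimpleGraph Function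
open scoped fwdDiff

theorem Function.Periodic.of_mem_closure {G X : Type*} [AddGroup G] {φ : G → X} {S : Set G}
    (h : ∀ s ∈ S, Periodic φ s) {t : G} (ht : t ∈ AddSubgroup.closure S) : Periodic φ t := by
  induction ht using AddSubgroup.closure_induction with
  | mem s hs => exact h s hs
  | zero => exact fun x => by rw [add_zero]
  | add _ _ _ _ h₁ h₂ => exact h₁.add_period h₂
  | neg _ _ h => exact h.neg

section fwdDiff

variable {G H : Type*} [AddCommGroup G] [AddCommGroup H]

theorem periodic_fwdDiff_comm {f : G → H} {s t : G} :
    Periodic (Δ_[s] f) t ↔ Periodic (Δ_[t] f) s := by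
  refine forall_congr' fun x => ?_
  simp only [fwdDiff]
  rw [add_right_comm x t s, sub_eq_sub_iff_sub_eq_sub]

theorem map_add_of_periodic_fwdDiff {S : Set G} (hgen : AddSubgroup.closure S = ⊤) {f : G → H}
    (hf : f 0 = 0) (h : ∀ s ∈ S, ∀ t ∈ S, Periodic (Δ_[s] f) t) (x y : G) :
    f (x + y) = f x + f y := by
  have hmem : ∀ t, t ∈ AddSubgroup.closure S := fun t => hgen ▸ AddSubgroup.mem_top t
  have h₁ : ∀ s ∈ S, ∀ t, Periodic (Δ_[s] f) t := fun s hs t =>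
    Periodic.of_mem_closure (h s hs) (hmem t)
  have h₂ : Periodic (Δ_[y] f) x :=
    Periodic.of_mem_closure (fun s hs => periodic_fwdDiff_comm.1 (h₁ s hs y)) (hmem x)
  have := h₂.eq
  simp only [fwdDiff, zero_add, hf, sub_zero] at this
  exact sub_eq_iff_eq_add'.1 this

end fwdDiff

section FourCycles

variable {G : Type*} [AddCommGroup G] {S : Set G}

def NoNontrivialFourCycles (S : Set G) : Prop :=
  ∀ a b c d : G, a ∈ S → b ∈ S → c ∈ S → d ∈ S → a + b + c + d = 0 → a = -b ∨ a = -c ∨ a = -d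

theorem NoNontrivialFourCycles.eq_or_eq_of_add_eq_add (h4 : NoNontrivialFourCycles S)
    (hS : -S = S) {a b c d : G} (ha : a ∈ S) (hb : b ∈ S) (hc : c ∈ S) (hd : d ∈ S)
    (h : a + b = c + d) : a = -b ∨ a = c ∨ a = d := by
  have hneg : ∀ {x}, x ∈ S → -x ∈ S := fun hx => by rw [← hS]; exact Set.neg_mem_neg.2 hx
  simpa using h4 a b (-c) (-d) ha hb (hneg hc) (hneg hd) (by rw [h]; abel)

end FourCycles

namespace SimpleGraph

variable {G : Type*} [AddCommGroup G] {S : Set G}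

theorem addCayley_adj_iff_of_neg_eq (hS : -S = S) {u v : G} :
    (addCayley S).Adj u v ↔ u ≠ v ∧ v - u ∈ S := by
  rw [addCayley_adj, neg_add_eq_sub, neg_add_eq_sub, ← neg_sub v u, ← Set.mem_neg, hS, or_self]

theorem addCayley_adj_add_iff (hS : -S = S) {x s : G} :
    (addCayley S).Adj x (x + s) ↔ s ∈ S ∧ s ≠ 0 := by
  rw [addCayley_adj_iff_of_neg_eq hS, add_sub_cancel_left, ne_eq, left_eq_add, and_comm]

theorem commonNeighbors_addCayley (hS : -S = S) (h4 : NoNontrivialFourCycles S) {s t : G}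
    (hs : s ∈ S) (ht : t ∈ S) (hs0 : s ≠ 0) (ht0 : t ≠ 0) (hst : s + t ≠ 0) (x : G) :
    (addCayley S).commonNeighbors x (x + s + t) = {x + s, x + t} := by
  ext z
  rw [mem_commonNeighbors, adj_comm _ (x + s + t)]
  simp only [addCayley_adj_iff_of_neg_eq hS, Set.mem_insert_iff, Set.mem_singleton_iff]
  constructor
  · rintro ⟨⟨-, ha⟩, -, hb⟩
    rcases h4.eq_or_eq_of_add_eq_add hS ha hb hs ht (by abel) with h | h | h
    · exact absurd (by rw [show s + t = z - x + (x + s + t - z) by abel, h, neg_add_cancel]) hst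
    · exact Or.inl (sub_eq_iff_eq_add'.1 h)
    · exact Or.inr (sub_eq_iff_eq_add'.1 h)
  · rintro (rfl | rfl)
    · refine ⟨⟨?_, by simpa⟩, ?_, by rwa [add_sub_cancel_left]⟩
      · simpa [eq_comm] using hs0
      · simpa using ht0
    · refine ⟨⟨?_, by simpa⟩, ?_, by rwa [add_right_comm, add_sub_cancel_left]⟩
      · simpa [eq_comm] using ht0
      · rw [add_right_comm]; simpa using hs0

theorem Iso.image_commonNeighbors {V W : Type*} {G₁ : SimpleGraph V} {G₂ : SimpleGraph W}
    (f : G₁ ≃g G₂) (v w : V) :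
    f '' G₁.commonNeighbors v w = G₂.commonNeighbors (f v) (f w) := by
  ext z
  obtain ⟨z, rfl⟩ := f.surjective z
  simp [f.injective.mem_set_image, mem_commonNeighbors, f.map_adj_iff]

variable (hS : -S = S) (h4 : NoNontrivialFourCycles S) (f : addCayley S ≃g addCayley S)
include hS

theorem Iso.exists_map_add_eq_add {s : G} (hs : s ∈ S) (hs0 : s ≠ 0) (x : G) :
    ∃ a ∈ S, a ≠ 0 ∧ f (x + s) = f x + a := by
  have hadj := f.map_adj_iff.2 ((addCayley_adj_add_iff hS (x := x)).2 ⟨hs, hs0⟩)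
  rw [addCayley_adj_iff_of_neg_eq hS] at hadj
  exact ⟨_, hadj.2, sub_ne_zero.2 hadj.1.symm, (add_sub_cancel _ _).symm⟩

include h4

theorem Iso.periodic_fwdDiff_of_add_ne_zero {s t : G} (hs : s ∈ S) (ht : t ∈ S)
    (hst : s + t ≠ 0) : Periodic (Δ_[s] f) t := by
  intro x
  rcases eq_or_ne s 0 with rfl | hs0
  · simp [fwdDiff]
  rcases eq_or_ne t 0 with rfl | ht0
  · simp
  obtain ⟨a, haS, ha0, hfa⟩ := f.exists_map_add_eq_add hS hs hs0 x
  obtain ⟨b, hbS, hb0, hfb⟩ := f.exists_map_add_eq_add hS ht ht0 (x + s)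
  rw [hfa] at hfb
  have hab : a + b ≠ 0 := fun hab => hst <| by
    have := f.injective (hfb.trans (by rw [add_assoc, hab, add_zero]))
    rwa [add_assoc, add_eq_left] at this
  have hpair : ({f (x + s), f (x + t)} : Set G) = {f x + a, f x + b} := by
    rw [← Set.image_pair, ← commonNeighbors_addCayley hS h4 hs ht hs0 ht0 hst,
      f.image_commonNeighbors, hfb, commonNeighbors_addCayley hS h4 haS hbS ha0 hb0 hab]
  have hft : f (x + t) = f x + b := by
    rw [hfa, Set.pair_eq_pair_iff] at hpair
    rcases hpair with h | h
    · exact h.2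
    · exact h.2.trans h.1
  simp only [fwdDiff]
  rw [add_right_comm, hfb, hft, hfa]
  abel

theorem Iso.periodic_fwdDiff_self_of_add_self_eq_zero {s : G} (hs : s ∈ S) (hss : s + s = 0) :
    Periodic (Δ_[s] f) s := by
  intro x
  rcases eq_or_ne s 0 with rfl | hs0
  · simp
  obtain ⟨a, haS, -, hfa⟩ := f.exists_map_add_eq_add hS hs hs0 x
  have haa : a + a = 0 := by
    by_contra haa
    have h := f.symm.periodic_fwdDiff_of_add_ne_zero hS h4 haS haS haa (f x)
    have hxs : f.symm (f x + a) = x + s := by rw [← hfa, f.symm_apply_apply]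
    simp only [fwdDiff, hxs, f.symm_apply_apply] at h
    have : f.symm (f x + a + a) = f.symm (f x) := by
      rw [sub_eq_iff_eq_add.1 h, f.symm_apply_apply, add_sub_cancel_left, add_left_comm, hss,
        add_zero]
    rw [f.symm.injective.eq_iff, add_assoc, add_eq_left] at this
    exact haa this
  simp only [fwdDiff]
  rw [add_assoc, hss, add_zero, hfa, sub_add_cancel_left, add_sub_cancel_left]
  exact neg_eq_of_add_eq_zero_left haa

theorem Iso.periodic_fwdDiff {s t : G} (hs : s ∈ S) (ht : t ∈ S) : Periodic (Δ_[s] f) t := by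
  rcases ne_or_eq (s + t) 0 with hst | hst
  · exact f.periodic_fwdDiff_of_add_ne_zero hS h4 hs ht hst
  obtain rfl : t = -s := eq_neg_of_add_eq_zero_right hst
  rcases ne_or_eq (s + s) 0 with hss | hss
  · exact (f.periodic_fwdDiff_of_add_ne_zero hS h4 hs hs hss).neg
  · exact (f.periodic_fwdDiff_self_of_add_self_eq_zero hS h4 hs hss).neg

theorem Iso.map_add_of_noNontrivialFourCycles (hgen : AddSubgroup.closure S = ⊤) (hf : f 0 = 0)
    (x y : G) : f (x + y) = f x + f y :=
  map_add_of_periodic_fwdDiff hgen hf (fun _ hs _ ht => f.periodic_fwdDiff hS h4 hs ht) x y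

end SimpleGraph

theorem neg_genSet {n : ℕ} (M : Matrix (Fin n) (Fin n) ℤ) : -genSet M = genSet M := by
  ext x
  simp only [genSet, Set.mem_neg, Set.mem_ofPred_eq, neg_eq_iff_eq_neg, neg_neg, or_comm]

theorem GM_eq_addCayley {n : ℕ} (M : Matrix (Fin n) (Fin n) ℤ) :
    GM M = addCayley (genSet M) := by
  ext u v
  rw [addCayley_adj_iff_of_neg_eq (neg_genSet M)]
  simp only [GM, fromRel_adj, genSet, Set.mem_ofPred_eq, ← exists_or, ← neg_sub v u,
    neg_eq_iff_eq_neg]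

theorem closure_genSet {n : ℕ} (M : Matrix (Fin n) (Fin n) ℤ) :
    AddSubgroup.closure (genSet M) = ⊤ := by
  refine eq_top_iff.2 fun x _ => ?_
  obtain ⟨v, rfl⟩ := Submodule.Quotient.mk_surjective _ x
  have hv : Submodule.Quotient.mk v = ∑ i, v i • qk M (Pi.single i 1) := by
    conv_lhs => rw [← Finset.univ_sum_single v]
    rw [← Submodule.mkQ_apply, map_sum]
    refine Finset.sum_congr rfl fun i _ => ?_
    rw [qk, ← Submodule.mkQ_apply, ← map_zsmul, ← Pi.single_smul, smul_eq_mul, mul_one]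
  have hgen : ∀ i, qk M (Pi.single i 1) ∈ genSet M := fun i => ⟨i, Or.inl rfl⟩
  rw [hv]
  exact sum_mem fun i _ => zsmul_mem (AddSubgroup.subset_closure (hgen i)) _

theorem stmt_8 {n : ℕ} (M : Matrix (Fin n) (Fin n) ℤ)
    (h : NoNontrivial4Cycles M) (f : GM M ≃g GM M) (hf : f 0 = 0) :
    ∀ x y : Zq M, f (x + y) = f x + f y := by
  revert f
  rw [GM_eq_addCayley]
  exact fun f hf => f.map_add_of_noNontrivialFourCycles (neg_genSet M) h (closure_genSet M) hf
end

section
/- For a non-singular integer matrix M and a signed permutation matrix P, the map f(x) = Px (on Z^n/M Z^n) is a well-defined graph automorphism of G(M) if and only if there exists an integer matrix Q with PM = MQ. -/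
open Matrix Polynomial

/-! `P` permutes `±Bₙ`, so it induces an automorphism of `G(M)` as soon as it induces a bijection
of `ℤⁿ/Mℤⁿ`. It descends to the quotient iff `P(Mℤⁿ) ⊆ Mℤⁿ`, which read column by column is
`PM = MQ`. For bijectivity, note that `P` lies in the integer orthogonal group, which is finite
since all entries of its elements are bounded by `1`; hence `Pᵀ = P⁻¹` is a power of `P` and
preserves `Mℤⁿ` too. -/

namespace Matrix

theorem abs_le_one_of_mul_transpose_eq_one {ι : Type*} [Fintype ι] [DecidableEq ι]
    {A : Matrix ι ι ℤ} (hA : A * Aᵀ = 1) (i j : ι) : |A i j| ≤ 1 := by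
  have hrow : ∑ k, A i k * A i k = 1 := by
    simpa [mul_apply] using congrFun (congrFun hA i) i
  rw [abs_le_one_iff_mul_self_le_one, ← hrow]
  exact Finset.single_le_sum (fun k _ => mul_self_nonneg (A i k)) (Finset.mem_univ j)

instance finite_orthogonalGroup_int {ι : Type*} [Fintype ι] [DecidableEq ι] :
    Finite (orthogonalGroup ι ℤ) :=
  Finite.of_injective
    (fun A i j => (⟨A.1 i j, abs_le.mp (abs_le_one_of_mul_transpose_eq_one
      ((mem_orthogonalGroup_iff ι ℤ).mp A.2) i j)⟩ : Set.Icc (-1 : ℤ) 1))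
    fun _ _ h => Subtype.ext <| Matrix.ext fun i j =>
      congrArg Subtype.val (congrFun (congrFun h i) j)

theorem exists_pow_eq_transpose_of_mul_transpose_eq_one {ι : Type*} [Fintype ι] [DecidableEq ι]
    {A : Matrix ι ι ℤ} (hA : A * Aᵀ = 1) : ∃ k : ℕ, A ^ k = Aᵀ := by
  let u : orthogonalGroup ι ℤ := ⟨A, (mem_orthogonalGroup_iff ι ℤ).mpr hA⟩
  obtain ⟨k, hk⟩ := (isOfFinOrder_of_finite u).mem_powers_iff_mem_zpowers.mpr
    (Subgroup.inv_mem _ (Subgroup.mem_zpowers u))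
  exact ⟨k, congrArg Subtype.val hk⟩

theorem exists_mul_eq_mul_iff_range_le_comap {R : Type*} [CommRing R] {m n : Type*} [Fintype m]
    [Fintype n] [DecidableEq n] (M : Matrix m n R) (P : Matrix m m R) :
    (∃ Q : Matrix n n R, P * M = M * Q) ↔
      LinearMap.range M.mulVecLin ≤ (LinearMap.range M.mulVecLin).comap P.mulVecLin := by
  constructor
  · rintro ⟨Q, hQ⟩ _ ⟨y, rfl⟩
    exact ⟨Q *ᵥ y, by simp [mulVec_mulVec, hQ]⟩
  · intro h
    choose w hw using fun j : n => h ⟨Pi.single j 1, rfl⟩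
    refine ⟨of fun i j => w j i, ext_of_mulVec_single fun j => ?_⟩
    rw [← mulVec_mulVec, ← mulVec_mulVec, mulVec_single_one (of _)]
    exact (hw j).symm

theorem map_range_mulVecLin_eq_of_mul_transpose_eq_one {ι : Type*} [Fintype ι] [DecidableEq ι]
    {M P Q : Matrix ι ι ℤ} (hP : P * Pᵀ = 1) (hPM : P * M = M * Q) :
    (LinearMap.range M.mulVecLin).map P.mulVecLin = LinearMap.range M.mulVecLin := by
  obtain ⟨k, hk⟩ := exists_pow_eq_transpose_of_mul_transpose_eq_one hP
  have hPtM : Pᵀ * M = M * Q ^ k := by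
    rw [← hk]; exact (SemiconjBy.pow_right hPM.symm k).symm
  refine le_antisymm (Submodule.map_le_iff_le_comap.mpr
    ((exists_mul_eq_mul_iff_range_le_comap M P).mp ⟨Q, hPM⟩)) fun v hv => ?_
  refine ⟨Pᵀ *ᵥ v, (exists_mul_eq_mul_iff_range_le_comap M Pᵀ).mp ⟨_, hPtM⟩ hv, ?_⟩
  simp [mulVec_mulVec, hP]

end Matrix

namespace IsSignedPerm

variable {n : ℕ} {P : Matrix (Fin n) (Fin n) ℤ}

theorem transpose (hP : IsSignedPerm P) : IsSignedPerm Pᵀ := by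
  obtain ⟨σ, ε, hε, hPσ⟩ := hP
  refine ⟨σ.symm, fun i => ε (σ.symm i), fun i => hε _, fun i j => ?_⟩
  rw [transpose_apply, hPσ]
  by_cases hij : i = σ.symm j
  · subst hij; simp
  · rw [if_neg (fun h => hij (by simp [h])), if_neg hij]

theorem mul_transpose_self (hP : IsSignedPerm P) : P * Pᵀ = 1 := by
  obtain ⟨σ, ε, hε, hPσ⟩ := hP
  ext i j
  rw [mul_apply, Finset.sum_eq_single (σ.symm i)]
  · by_cases hij : i = j
    · subst hij
      rcases hε (σ.symm i) with h | h <;> simp [hPσ, h]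
    · simp [hPσ, hij, Ne.symm hij]
  · intro k _ hk
    simp [hPσ, show i ≠ σ k from fun h => hk (by simp [h])]
  · simp

theorem mulVec_single (hP : IsSignedPerm P) (i : Fin n) :
    ∃ j, P *ᵥ Pi.single i 1 = Pi.single j 1 ∨ P *ᵥ Pi.single i 1 = -Pi.single j 1 := by
  obtain ⟨σ, ε, hε, hPσ⟩ := hP
  have hcol : P *ᵥ Pi.single i 1 = Pi.single (σ i) (ε i) := by
    ext k; simp [hPσ, Pi.single_apply]
  refine ⟨σ i, ?_⟩
  rcases hε i with h | h <;> simp [hcol, h, Pi.single_neg]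

end IsSignedPerm

section CayleyGraph

variable {n : ℕ} {M : Matrix (Fin n) (Fin n) ℤ}

theorem qk_eq_zero_iff {v : Fin n → ℤ} : qk M v = 0 ↔ v ∈ LinearMap.range M.mulVecLin :=
  Submodule.Quotient.mk_eq_zero _

theorem GM_adj_iff {a b : Zq M} : (GM M).Adj a b ↔ a ≠ b ∧ b - a ∈ genSet M := by
  simp only [GM, SimpleGraph.fromRel_adj, genSet, Set.mem_ofPred_eq, ← exists_or,
    ← neg_sub b a, neg_eq_iff_eq_neg]

def GM.isoOfMapsTo (e : Zq M ≃+ Zq M) (he : Set.MapsTo e (genSet M) (genSet M))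
    (he' : Set.MapsTo e.symm (genSet M) (genSet M)) : GM M ≃g GM M where
  toEquiv := e.toEquiv
  map_rel_iff' {a b} := by
    have hmem : e b - e a ∈ genSet M ↔ b - a ∈ genSet M := by
      rw [← map_sub]
      exact ⟨fun h => by simpa using he' h, fun h => he h⟩
    simp [GM_adj_iff, hmem]

theorem IsSignedPerm.mapsTo_genSet {A : Matrix (Fin n) (Fin n) ℤ} (hA : IsSignedPerm A)
    (f : Zq M →+ Zq M) (hf : ∀ v, f (qk M v) = qk M (A *ᵥ v)) :
    Set.MapsTo f (genSet M) (genSet M) := by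
  have hsingle : ∀ i, f (qk M (Pi.single i 1)) ∈ genSet M := fun i => by
    obtain ⟨j, hj | hj⟩ := hA.mulVec_single i
    · exact ⟨j, Or.inl (by rw [hf, hj])⟩
    · exact ⟨j, Or.inr (by rw [hf, hj]; exact Submodule.Quotient.mk_neg _)⟩
  rintro _ ⟨i, rfl | rfl⟩
  · exact hsingle i
  · obtain ⟨j, h⟩ := hsingle i
    exact ⟨j, by rw [map_neg, neg_eq_iff_eq_neg]; tauto⟩

end CayleyGraph

theorem stmt_10_general {n : ℕ} (M P : Matrix (Fin n) (Fin n) ℤ)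
    (hP : IsSignedPerm P) :
    (∃ f : GM M ≃g GM M, ∀ v : Fin n → ℤ, f (qk M v) = qk M (P.mulVec v)) ↔
      ∃ Q : Matrix (Fin n) (Fin n) ℤ, P * M = M * Q := by
  constructor
  · rintro ⟨f, hf⟩
    have hf0 : f 0 = 0 := by simpa [qk] using hf 0
    refine (exists_mul_eq_mul_iff_range_le_comap M P).mpr ?_
    rintro _ ⟨y, rfl⟩
    rw [Submodule.mem_comap, ← qk_eq_zero_iff, mulVecLin_apply, ← hf,
      qk_eq_zero_iff.mpr ⟨y, rfl⟩, hf0]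
  · rintro ⟨Q, hPM⟩
    have hPP := hP.mul_transpose_self
    let e := Submodule.Quotient.equiv _ _
      (P.toLinearEquiv' (invertibleOfRightInverse _ _ hPP)) (map_range_mulVecLin_eq_of_mul_transpose_eq_one hPP hPM)
    exact ⟨GM.isoOfMapsTo e.toAddEquiv (hP.mapsTo_genSet e.toAddMonoidHom fun _ => rfl)
      (hP.transpose.mapsTo_genSet e.symm.toAddMonoidHom fun _ => rfl), fun _ => rfl⟩

theorem stmt_10 {n : ℕ} (M P : Matrix (Fin n) (Fin n) ℤ)
    (hM : M.det ≠ 0) (hP : IsSignedPerm P) :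
    (∃ f : GM M ≃g GM M, ∀ v : Fin n → ℤ, f (qk M v) = qk M (P.mulVec v)) ↔
      ∃ Q : Matrix (Fin n) (Fin n) ℤ, P * M = M * Q :=
  stmt_10_general M P hP
end

section
/- There are exactly two similarity classes (over unimodular integer conjugation) of integer 3×3 matrices with characteristic polynomial λ^3 − 1, represented by Q1 = [[1,0,0],[0,−1,1],[0,−1,0]] and Q2 = [[1,0,1],[0,−1,1],[0,−1,0]]. -/
open Matrix Polynomial

/-!
A matrix `A` with characteristic polynomial `X³ - 1` fixes a nonzero integer vector. Over a PID
every vector is a multiple of a basis vector, so `A` is conjugate to a block matrix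
`[[1, w], [0, B]]` with `tr B = -1`, `det B = 1`. For `u ∈ ℤ²` the determinant `det (B u, u)` is a
binary quadratic form of discriminant `-3`, and every such form represents `±1` (a reduced form of
discriminant `-3` has leading coefficient `1`); for such a `u` the basis `(B u, u)` conjugates `B`
to `[[-1, 1], [-1, 0]]`. Conjugating by `[[1, p], [0, 1]]` changes `w` by `p (1 - B)`, a lattice
of index `3`, and conjugating by `diag (-1, 1, 1)` changes `w` to `-w`; this leaves the classes
`w ≡ 0` and `w ≢ 0` modulo that lattice. They are distinct because `Q² + Q + 1` is
`diag (3, 0, 0)` for `Q₁` but has first row `(3, -1, 2)` for `Q₂`, which forces `3 ∣ det U` for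
any `U` with `Q₁ U = U Q₂`.
-/

theorem Int.exists_binaryForm_eq_one_of_discr_eq_neg_three {a b c : ℤ} (ha : 0 < a)
    (hd : b ^ 2 - 4 * a * c = -3) : ∃ x y : ℤ, a * x ^ 2 + b * x * y + c * y ^ 2 = 1 := by
  -- After `x ↦ x + k y` we have `|b| ≤ a`: either `c < a` and we recurse on the form
  -- `(c, -b, a)`, or the form is reduced and `3 a² ≤ 4 a c - b² = 3`.
  obtain ⟨k, hk₁, hk₂⟩ : ∃ k : ℤ, -a < b + 2 * a * k ∧ b + 2 * a * k ≤ a := by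
    refine ⟨(a - b) / (2 * a), ?_⟩
    have := Int.mul_ediv_add_emod (a - b) (2 * a)
    have := Int.emod_nonneg (a - b) (by omega : 2 * a ≠ 0)
    have := Int.emod_lt_of_pos (a - b) (by omega : 0 < 2 * a)
    constructor <;> linarith
  set b' := b + 2 * a * k
  set c' := a * k ^ 2 + b * k + c
  have hd' : b' ^ 2 - 4 * a * c' = -3 := by linear_combination hd
  by_cases hc : c' < a
  · have hc' : 0 < c' := by nlinarith
    obtain ⟨x, y, h⟩ := exists_binaryForm_eq_one_of_discr_eq_neg_three (b := -b') (c := a) hc'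
      (by linear_combination hd')
    exact ⟨-y + k * x, x, by linear_combination h⟩
  · obtain rfl : a = 1 := by nlinarith
    exact ⟨1, 0, by ring⟩
termination_by a.toNat
decreasing_by omega

theorem Int.exists_isUnit_binaryForm_of_discr_eq_neg_three {a b c : ℤ}
    (hd : b ^ 2 - 4 * a * c = -3) : ∃ x y : ℤ, IsUnit (a * x ^ 2 + b * x * y + c * y ^ 2) := by
  rcases lt_trichotomy a 0 with ha | rfl | ha
  · obtain ⟨x, y, h⟩ := exists_binaryForm_eq_one_of_discr_eq_neg_three (b := -b) (c := -c)
      (neg_pos.mpr ha) (by linear_combination hd)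
    exact ⟨x, y, Int.isUnit_iff.mpr (Or.inr (by linear_combination -h))⟩
  · nlinarith [sq_nonneg b]
  · obtain ⟨x, y, h⟩ := exists_binaryForm_eq_one_of_discr_eq_neg_three ha hd
    exact ⟨x, y, h ▸ isUnit_one⟩

theorem Module.Basis.exists_eq_smul_basis {R M ι : Type*} [CommRing R] [IsDomain R]
    [IsPrincipalIdealRing R] [AddCommGroup M] [Module R M] [Finite ι]
    (b : Basis ι R M) (v : M) (i₀ : ι) : ∃ (b' : Basis ι R M) (c : R), v = c • b' i₀ := by
  classical
  obtain ⟨n, snf⟩ := (R ∙ v).smithNormalForm b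
  have hn : n ≤ 1 := by
    have := finrank_span_le_card (R := R) ({v} : Set M)
    rwa [Set.toFinset_singleton, Finset.card_singleton, Module.finrank_eq_card_basis snf.bN,
      Fintype.card_fin] at this
  obtain ⟨x, hx⟩ : ∃ x : Fin n → R, v = ∑ i, x i • (snf.bN i : M) := by
    have := congrArg Subtype.val (snf.bN.sum_repr ⟨v, Submodule.mem_span_singleton_self v⟩)
    rw [Submodule.coe_sum] at this
    exact ⟨_, this.symm⟩
  rcases Nat.le_one_iff_eq_zero_or_eq_one.mp hn with rfl | rfl
  · exact ⟨b, 0, by simpa using hx⟩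
  · refine ⟨snf.bM.reindex (Equiv.swap i₀ (snf.f 0)), x 0 * snf.a 0, ?_⟩
    simp [hx, snf.snf, mul_smul]

theorem Matrix.exists_conj_col_eq_single {R ι : Type*} [CommRing R] [IsDomain R]
    [IsPrincipalIdealRing R] [Fintype ι] [DecidableEq ι] (A : Matrix ι ι R) {v : ι → R}
    (hv : v ≠ 0) {μ : R} (hAv : A *ᵥ v = μ • v) (i₀ : ι) :
    ∃ U B : Matrix ι ι R, IsUnit U.det ∧ A * U = U * B ∧ B.col i₀ = Pi.single i₀ μ := by
  obtain ⟨b, c, rfl⟩ := (Pi.basisFun R ι).exists_eq_smul_basis v i₀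
  set U := (Pi.basisFun R ι).toMatrix b
  have hU : IsUnit U.det := by
    let _ := (Pi.basisFun R ι).invertibleToMatrix b
    exact (isUnit_iff_isUnit_det U).mp (isUnit_of_invertible U)
  have hUcol : U *ᵥ Pi.single i₀ 1 = b i₀ := by
    ext i
    simp [U, Module.Basis.toMatrix_apply]
  have hc : c ≠ 0 := by
    rintro rfl
    simp at hv
  have hAb : A *ᵥ b i₀ = μ • b i₀ := by
    apply smul_right_injective _ hc
    simpa [mulVec_smul, smul_comm c μ] using hAv
  refine ⟨U, U⁻¹ * A * U, hU, by rw [Matrix.mul_assoc, mul_nonsing_inv_cancel_left _ _ hU], ?_⟩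
  rw [← mulVec_single_one, ← mulVec_mulVec, hUcol, ← mulVec_mulVec, hAb, mulVec_smul, ← hUcol,
    mulVec_mulVec, nonsing_inv_mul _ hU, one_mulVec, ← Pi.single_smul', smul_eq_mul, mul_one]

theorem Matrix.exists_mulVec_eq_self_of_eval_one_charpoly {R n : Type*} [CommRing R] [IsDomain R]
    [Fintype n] [DecidableEq n] {A : Matrix n n R} (hA : A.charpoly.eval 1 = 0) :
    ∃ v ≠ 0, A *ᵥ v = v := by
  rw [eval_charpoly, scalar_apply, diagonal_one, ← exists_mulVec_eq_zero_iff] at hA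
  obtain ⟨v, hv, h⟩ := hA
  exact ⟨v, hv, by rwa [sub_mulVec, one_mulVec, sub_eq_zero, eq_comm] at h⟩

theorem Matrix.trace_eq_zero_and_det_eq_one_of_charpoly_eq {R : Type*} [CommRing R]
    [Nontrivial R] {A : Matrix (Fin 3) (Fin 3) R} (hA : A.charpoly = X ^ 3 - 1) :
    A.trace = 0 ∧ A.det = 1 := by
  rw [trace_eq_neg_charpoly_coeff, det_eq_sign_charpoly_coeff, hA]
  norm_num [coeff_one]

namespace SimilarInt

variable {n : ℕ} {A B C : Matrix (Fin n) (Fin n) ℤ}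

theorem trans (hAB : SimilarInt A B) (hBC : SimilarInt B C) : SimilarInt A C := by
  obtain ⟨U, hU, hAU⟩ := hAB
  obtain ⟨V, hV, hBV⟩ := hBC
  refine ⟨U * V, by rw [det_mul]; exact hU.mul hV, ?_⟩
  rw [← Matrix.mul_assoc, hAU, Matrix.mul_assoc, hBV, Matrix.mul_assoc]

theorem charpoly_eq (h : SimilarInt A B) : A.charpoly = B.charpoly := by
  obtain ⟨U, hU, hAU⟩ := h
  have hB : B = U⁻¹ * (A * U) := by rw [hAU, nonsing_inv_mul_cancel_left _ _ hU]
  rw [hB, charpoly_mul_comm, Matrix.mul_assoc, mul_nonsing_inv _ hU, Matrix.mul_one]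

end SimilarInt

def omegaMatrix : Matrix (Fin 2) (Fin 2) ℤ := !![-1, 1; -1, 0]

theorem similarInt_omegaMatrix_of_trace_of_det (B : Matrix (Fin 2) (Fin 2) ℤ)
    (htr : B.trace = -1) (hdet : B.det = 1) : SimilarInt B omegaMatrix := by
  rw [trace_fin_two] at htr
  rw [det_fin_two] at hdet
  obtain ⟨x, y, hxy⟩ := Int.exists_isUnit_binaryForm_of_discr_eq_neg_three
    (a := B 1 0) (b := B 1 1 - B 0 0) (c := -B 0 1)
    (by linear_combination (B 0 0 + B 1 1 - 1) * htr - 4 * hdet)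
  refine ⟨!![B 0 0 * x + B 0 1 * y, x; B 1 0 * x + B 1 1 * y, y], ?_, ?_⟩
  · rw [det_fin_two_of]
    convert hxy.neg using 1
    ring
  · ext i j
    fin_cases i <;> fin_cases j <;>
      simp only [omegaMatrix, Matrix.mul_apply, Fin.sum_univ_two, of_apply, cons_val',
        cons_val_zero, cons_val_one, cons_val_fin_one, Fin.zero_eta, Fin.mk_one, Fin.isValue]
    · linear_combination (B 0 0 * x + B 0 1 * y) * htr - x * hdet
    · ring
    · linear_combination (B 1 0 * x + B 1 1 * y) * htr - y * hdet
    · ring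

def triBlock (r s : ℤ) (B : Matrix (Fin 2) (Fin 2) ℤ) : Matrix (Fin 3) (Fin 3) ℤ :=
  !![1, r, s; 0, B 0 0, B 0 1; 0, B 1 0, B 1 1]

theorem trace_triBlock (r s : ℤ) (B : Matrix (Fin 2) (Fin 2) ℤ) :
    (triBlock r s B).trace = 1 + B.trace := by
  simp [triBlock, trace_fin_three, trace_fin_two, add_assoc]

theorem det_triBlock (r s : ℤ) (B : Matrix (Fin 2) (Fin 2) ℤ) :
    (triBlock r s B).det = B.det := by
  simp [triBlock, det_fin_three, det_fin_two]

theorem SimilarInt.exists_triBlock {B C : Matrix (Fin 2) (Fin 2) ℤ} (h : SimilarInt B C) (r s : ℤ) :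
    ∃ r' s', SimilarInt (triBlock r s B) (triBlock r' s' C) := by
  obtain ⟨U, hU, hBU⟩ := h
  refine ⟨r * U 0 0 + s * U 1 0, r * U 0 1 + s * U 1 1,
    !![1, 0, 0; 0, U 0 0, U 0 1; 0, U 1 0, U 1 1], ?_, ?_⟩
  · simpa [det_fin_three, det_fin_two, mul_comm] using hU
  · have := congrFun₂ hBU
    simp only [Matrix.mul_apply, Fin.sum_univ_two] at this
    ext i j
    fin_cases i <;> fin_cases j <;>
      simp [triBlock, Matrix.mul_apply, Fin.sum_univ_three, this]

theorem exists_similarInt_triBlock {A : Matrix (Fin 3) (Fin 3) ℤ} (hA : A.charpoly = X ^ 3 - 1) :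
    ∃ r s : ℤ, ∃ B : Matrix (Fin 2) (Fin 2) ℤ,
      B.trace = -1 ∧ B.det = 1 ∧ SimilarInt A (triBlock r s B) := by
  obtain ⟨v, hv, hAv⟩ := exists_mulVec_eq_self_of_eval_one_charpoly (A := A) (by simp [hA])
  obtain ⟨U, B, hU, hAU, hB⟩ := exists_conj_col_eq_single A hv (μ := 1) (by rw [hAv, one_smul]) 0
  have hB' : B = triBlock (B 0 1) (B 0 2) (B.submatrix Fin.succ Fin.succ) := by
    have hcol (i : Fin 3) : B i 0 = (Pi.single 0 1 : Fin 3 → ℤ) i := congrFun hB i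
    ext i j
    fin_cases i <;> fin_cases j <;> simp [triBlock, hcol]
  have hAB : SimilarInt A (triBlock (B 0 1) (B 0 2) (B.submatrix Fin.succ Fin.succ)) :=
    ⟨U, hU, hB' ▸ hAU⟩
  obtain ⟨htr, hdet⟩ := trace_eq_zero_and_det_eq_one_of_charpoly_eq (hAB.charpoly_eq ▸ hA)
  refine ⟨_, _, _, ?_, ?_, hAB⟩
  · linarith [trace_triBlock (B 0 1) (B 0 2) (B.submatrix Fin.succ Fin.succ)]
  · rwa [det_triBlock] at hdet

theorem similarInt_triBlock_shift (r s p q : ℤ) :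
    SimilarInt (triBlock r s omegaMatrix) (triBlock (r + 2 * p + q) (s + q - p) omegaMatrix) := by
  refine ⟨!![1, p, q; 0, 1, 0; 0, 0, 1], by simp [det_fin_three], ?_⟩
  ext i j
  fin_cases i <;> fin_cases j <;>
    simp only [triBlock, omegaMatrix, Matrix.mul_apply, Fin.sum_univ_three, of_apply, cons_val',
      cons_val_zero, cons_val_one, cons_val, cons_val_fin_one, Fin.zero_eta, Fin.mk_one,
      Fin.reduceFinMk, Fin.isValue] <;> ring

theorem similarInt_triBlock_neg (r s : ℤ) :
    SimilarInt (triBlock r s omegaMatrix) (triBlock (-r) (-s) omegaMatrix) := by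
  refine ⟨!![-1, 0, 0; 0, 1, 0; 0, 0, 1], by simp [det_fin_three], ?_⟩
  ext i j
  fin_cases i <;> fin_cases j <;> simp [triBlock, omegaMatrix, Matrix.mul_apply, Fin.sum_univ_three]

theorem similarInt_triBlock_zero_sub_emod (r s : ℤ) :
    SimilarInt (triBlock r s omegaMatrix) (triBlock 0 ((s - r) % 3) omegaMatrix) := by
  convert similarInt_triBlock_shift r s ((s - r) / 3) (-r - 2 * ((s - r) / 3)) using 3
  · ring
  · linarith [Int.mul_ediv_add_emod (s - r) 3]

theorem similarInt_triBlock_zero_zero_or_zero_one (r s : ℤ) :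
    SimilarInt (triBlock r s omegaMatrix) (triBlock 0 0 omegaMatrix) ∨
      SimilarInt (triBlock r s omegaMatrix) (triBlock 0 1 omegaMatrix) := by
  have h := similarInt_triBlock_zero_sub_emod r s
  rcases (by omega : (s - r) % 3 = 0 ∨ (s - r) % 3 = 1 ∨ (s - r) % 3 = 2) with h0 | h1 | h2
  · exact .inl (h0 ▸ h)
  · exact .inr (h1 ▸ h)
  · refine .inr (h.trans ((similarInt_triBlock_neg _ _).trans ?_))
    simpa [h2] using similarInt_triBlock_zero_sub_emod 0 (-2)

theorem charpoly_triBlock_omegaMatrix (r s : ℤ) :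
    (triBlock r s omegaMatrix).charpoly = X ^ 3 - 1 := by
  have h : charmatrix (triBlock r s omegaMatrix) =
      !![X - 1, -C r, -C s; 0, X + 1, -1; 0, 1, X] := by
    ext i j
    fin_cases i <;> fin_cases j <;> simp [triBlock, omegaMatrix]
  rw [Matrix.charpoly, h]
  eval_det
  ring

theorem not_similarInt_triBlock_zero_zero_zero_one :
    ¬ SimilarInt (triBlock 0 0 omegaMatrix) (triBlock 0 1 omegaMatrix) := by
  rintro ⟨U, hU, hQU⟩
  have key : SemiconjBy U (triBlock 0 1 omegaMatrix ^ 2 + triBlock 0 1 omegaMatrix + 1)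
      (triBlock 0 0 omegaMatrix ^ 2 + triBlock 0 0 omegaMatrix + 1) := by
    have h : SemiconjBy U (triBlock 0 1 omegaMatrix) (triBlock 0 0 omegaMatrix) := hQU.symm
    exact ((h.pow_right 2).add_right h).add_right (.one_right U)
  have e₁ : triBlock 0 0 omegaMatrix ^ 2 + triBlock 0 0 omegaMatrix + 1 =
      !![3, 0, 0; 0, 0, 0; 0, 0, 0] := by decide
  have e₂ : triBlock 0 1 omegaMatrix ^ 2 + triBlock 0 1 omegaMatrix + 1 =
      !![3, -1, 2; 0, 0, 0; 0, 0, 0] := by decide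
  rw [e₁, e₂, SemiconjBy] at key
  have h₀₁ := congrFun₂ key 0 1
  have h₁₀ := congrFun₂ key 1 0
  have h₂₀ := congrFun₂ key 2 0
  simp only [Int.reduceNeg, Fin.isValue, Matrix.mul_apply, of_apply, cons_val', cons_val_one,
    cons_val_zero, cons_val_fin_one, Fin.sum_univ_three, mul_neg, mul_one, mul_zero, add_zero,
    cons_val, zero_mul, mul_eq_zero, OfNat.ofNat_ne_zero, or_false] at h₀₁ h₁₀ h₂₀
  have hdet : U.det = U 0 0 * (U 1 1 * U 2 2 - U 1 2 * U 2 1) := by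
    rw [det_fin_three, h₁₀, h₂₀]
    ring
  have h3 : (3 : ℤ) ∣ U.det := hdet ▸ Dvd.dvd.mul_right ⟨-U 0 1, by linarith⟩ _
  have := Int.isUnit_iff.mp (isUnit_of_dvd_unit h3 hU)
  norm_num at this

theorem stmt_14 :
    (!![1,0,0;0,-1,1;0,-1,0] : Matrix (Fin 3) (Fin 3) ℤ).charpoly = X ^ 3 - 1 ∧
    (!![1,0,1;0,-1,1;0,-1,0] : Matrix (Fin 3) (Fin 3) ℤ).charpoly = X ^ 3 - 1 ∧
    ¬ SimilarInt (!![1,0,0;0,-1,1;0,-1,0] : Matrix (Fin 3) (Fin 3) ℤ)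
        !![1,0,1;0,-1,1;0,-1,0] ∧
    ∀ A : Matrix (Fin 3) (Fin 3) ℤ, A.charpoly = X ^ 3 - 1 →
      SimilarInt A !![1,0,0;0,-1,1;0,-1,0] ∨ SimilarInt A !![1,0,1;0,-1,1;0,-1,0] := by
  refine ⟨charpoly_triBlock_omegaMatrix 0 0, charpoly_triBlock_omegaMatrix 0 1,
    not_similarInt_triBlock_zero_zero_zero_one, fun A hA => ?_⟩
  obtain ⟨r, s, B, htr, hdet, hAB⟩ := exists_similarInt_triBlock hA
  obtain ⟨r', s', hB⟩ := (similarInt_omegaMatrix_of_trace_of_det B htr hdet).exists_triBlock r s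
  exact (similarInt_triBlock_zero_zero_or_zero_one r' s').imp (hAB.trans hB).trans
    (hAB.trans hB).trans
end

section
/- The matrices Q1 = [[1,0,0],[0,−1,1],[0,−1,0]] and Q2 = [[1,0,1],[0,−1,1],[0,−1,0]] are not similar over the integers: there is no unimodular integer matrix U with Q1 U = U Q2. -/
open Matrix Polynomial

theorem stmt_15 :
    ¬ ∃ U : Matrix (Fin 3) (Fin 3) ℤ, IsUnit U.det ∧
      (!![1,0,0;0,-1,1;0,-1,0] : Matrix (Fin 3) (Fin 3) ℤ) * U =
        U * !![1,0,1;0,-1,1;0,-1,0] := by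
  rintro ⟨U, hdet, hU⟩
  have e10 := congrFun (congrFun hU 1) 0
  have e20 := congrFun (congrFun hU 2) 0
  have e01 := congrFun (congrFun hU 0) 1
  have e02 := congrFun (congrFun hU 0) 2
  simp [Matrix.mul_apply, Fin.sum_univ_three, Matrix.cons_val_zero, Matrix.cons_val_one, Matrix.head_cons, Matrix.cons_val_two, Matrix.tail_cons, Matrix.head_fin_const, Matrix.cons_val', Matrix.empty_val', Matrix.cons_val_fin_one, Matrix.vecHead, Matrix.vecTail] at e10 e20 e01 e02
  have h10 : U 1 0 = 0 := by omega
  have h20 : U 2 0 = 0 := by omega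
  have h00 : (3 : ℤ) ∣ U 0 0 := by omega
  rw [Matrix.det_fin_three, h10, h20] at hdet
  rw [Int.isUnit_iff] at hdet
  obtain ⟨k, hk⟩ := h00
  rcases hdet with hd | hd <;> rw [hk] at hd <;> ring_nf at hd <;> omega
end

section
/- Let f be a graph automorphism of G(M) fixing 0, and let a ∈ ±B_n. If f(−b) = −f(b) for every b ∈ ±B_n with b ∉ {a, −a}, then f^{−1}(−a) = −f^{−1}(a). -/
open Matrix Polynomial

lemma adj_zero_iff {n : ℕ} (M : Matrix (Fin n) (Fin n) ℤ) (x : Zq M) :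
    (GM M).Adj 0 x ↔ x ≠ 0 ∧ x ∈ genSet M := by
  simp only [GM, SimpleGraph.fromRel_adj, genSet, Set.mem_setOf_eq, sub_zero, zero_sub]
  constructor
  · rintro ⟨hne, ⟨i, hi⟩ | ⟨i, hi⟩⟩
    · exact ⟨Ne.symm hne, i, Or.inl hi⟩
    · exact ⟨Ne.symm hne, i, Or.inr (by rw [← hi, neg_neg])⟩
  · rintro ⟨hne, i, hi | hi⟩
    · exact ⟨Ne.symm hne, Or.inl ⟨i, hi⟩⟩
    · exact ⟨Ne.symm hne, Or.inr ⟨i, by rw [hi, neg_neg]⟩⟩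

theorem stmt_18 {n : ℕ} (M : Matrix (Fin n) (Fin n) ℤ)
    (f : GM M ≃g GM M) (hf : f 0 = 0) (a : Zq M) (ha : a ∈ genSet M)
    (h : ∀ b : Zq M, b ∈ genSet M → b ≠ a → b ≠ -a → f (-b) = -f b) :
    f.symm (-a) = -f.symm a := by
  have hs : f.symm 0 = 0 := by apply f.injective; rw [f.apply_symm_apply, hf]
  by_cases ha0 : a = 0
  · subst ha0; simp [hs]
  have hadj : (GM M).Adj 0 a := (adj_zero_iff M a).mpr ⟨ha0, ha⟩
  have hna : -a ∈ genSet M := by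
    obtain ⟨i, hi | hi⟩ := ha
    · exact ⟨i, Or.inr (by rw [hi])⟩
    · exact ⟨i, Or.inl (by rw [hi, neg_neg])⟩
  have hadj' : (GM M).Adj 0 (-a) := (adj_zero_iff M (-a)).mpr ⟨neg_ne_zero.mpr ha0, hna⟩
  have hc : (GM M).Adj 0 (f.symm a) := by
    have := f.symm.map_adj_iff.mpr hadj
    rwa [hs] at this
  have hd : (GM M).Adj 0 (f.symm (-a)) := by
    have := f.symm.map_adj_iff.mpr hadj'
    rwa [hs] at this
  obtain ⟨-, hcgen⟩ := (adj_zero_iff M _).mp hc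
  obtain ⟨-, hdgen⟩ := (adj_zero_iff M _).mp hd
  by_cases h1 : f.symm a = a
  · by_cases h1' : f.symm (-a) = a
    · have : a = -a := f.symm.injective (by rw [h1, h1'])
      rw [h1', h1, ← this]
    · by_cases h2' : f.symm (-a) = -a
      · rw [h2', h1]
      · have key : f (-f.symm (-a)) = a := by
          rw [h _ hdgen h1' h2', f.apply_symm_apply, neg_neg]
        have : -f.symm (-a) = f.symm a := by
          have := congrArg f.symm key
          rwa [f.symm_apply_apply] at this
        rw [← this, neg_neg]
  · by_cases h2 : f.symm a = -a
    · by_cases h1' : f.symm (-a) = a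
      · rw [h1', h2, neg_neg]
      · by_cases h2' : f.symm (-a) = -a
        · have : -a = a := f.symm.injective (by rw [h2, h2'])
          rw [h2', h2, neg_neg, this]
        · have key : f (-f.symm (-a)) = a := by
            rw [h _ hdgen h1' h2', f.apply_symm_apply, neg_neg]
          have : -f.symm (-a) = f.symm a := by
            have := congrArg f.symm key
            rwa [f.symm_apply_apply] at this
          rw [← this, neg_neg]
    · have key : f (-f.symm a) = -a := by
        rw [h _ hcgen h1 h2, f.apply_symm_apply]
      rw [← key, f.symm_apply_apply]
end
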